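/- If f : K → K' is a homomorphism of star-continuous partially additive Kleene algebras, then for every subset A of K, ⟨f[⟨A⟩]⟩ = ⟨f[A]⟩, where f[A] = {f(a) | a ∈ A} and ⟨·⟩ denotes the generated star-ideal. -/

import Mathlib

/-- A partially additive Kleene algebra: partial `+` (via `summable`), total `·`, `*`,
constants 0 and 1, satisfying the PKA axioms. -/
structure PKA (K : Type*) where
  summable : K → K → Prop
  add : K → K → K
  mul : K → K → K
  star : K → K
  zero : K
  one : K
  add_assoc : ∀ x y z, summable x y → summable (add x y) z → summable y z →
    summable x (add y z) ∧ add (add x y) z = add x (add y z)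
  add_comm : ∀ x y, summable x y → summable y x ∧ add x y = add y x
  summable_zero : ∀ x, summable x zero
  add_zero : ∀ x, add x zero = x
  summable_self : ∀ x, summable x x
  add_self : ∀ x, add x x = x
  mul_assoc : ∀ x y z, mul x (mul y z) = mul (mul x y) z
  one_mul : ∀ x, mul one x = x
  mul_one : ∀ x, mul x one = x
  left_distrib : ∀ x y z, summable x y →
    summable (mul z x) (mul z y) ∧ mul z (add x y) = add (mul z x) (mul z y)
  right_distrib : ∀ x y z, summable x y →
    summable (mul x z) (mul y z) ∧ mul (add x y) z = add (mul x z) (mul y z)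
  zero_mul : ∀ x, mul zero x = zero
  mul_zero : ∀ x, mul x zero = zero
  one_le_star : ∀ x, summable one (star x) ∧ add one (star x) = star x
  mul_star_le_star : ∀ x,
    summable (mul x (star x)) (star x) ∧ add (mul x (star x)) (star x) = star x
  star_mul_le_star : ∀ x,
    summable (mul (star x) x) (star x) ∧ add (mul (star x) x) (star x) = star x
  star_ind_left : ∀ a x, (summable (mul a x) x ∧ add (mul a x) x = x) →
    summable (mul (star a) x) x ∧ add (mul (star a) x) x = x
  star_ind_right : ∀ a x, (summable (mul x a) x ∧ add (mul x a) x = x) →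
    summable (mul x (star a)) x ∧ add (mul x (star a)) x = x

/-- The natural order on a PKA: `a ≤ b` iff `a` is summable with `b` and `a + b = b`. -/
def PKA.le {K : Type*} (P : PKA K) (a b : K) : Prop :=
  P.summable a b ∧ P.add a b = b

/-- Powers: `b^0 = 1`, `b^(n+1) = b·b^n`. -/
def PKA.pow {K : Type*} (P : PKA K) (b : K) : ℕ → K
  | 0 => P.one
  | n + 1 => P.mul b (P.pow b n)

/-- Star-continuity: `a·b*·c` is the least upper bound of `{a·b^n·c | n < ω}`. -/
def PKA.StarContinuous {K : Type*} (P : PKA K) : Prop :=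
  ∀ a b c,
    (∀ n, P.le (P.mul a (P.mul (P.pow b n) c)) (P.mul a (P.mul (P.star b) c))) ∧
    (∀ w, (∀ n, P.le (P.mul a (P.mul (P.pow b n) c)) w) →
      P.le (P.mul a (P.mul (P.star b) c)) w)

/-- A star-ideal: nonempty, closed under defined sums, downward closed,
and closed under the star rule. -/
def PKA.IsStarIdeal {K : Type*} (P : PKA K) (A : Set K) : Prop :=
  A.Nonempty ∧
  (∀ a ∈ A, ∀ b ∈ A, P.summable a b → P.add a b ∈ A) ∧
  (∀ x y, y ∈ A → P.le x y → x ∈ A) ∧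
  (∀ a b c, (∀ n, P.mul a (P.mul (P.pow b n) c) ∈ A) →
    P.mul a (P.mul (P.star b) c) ∈ A)

/-- The star-ideal generated by `A`: the intersection of all star-ideals containing `A`. -/
def PKA.gen {K : Type*} (P : PKA K) (A : Set K) : Set K :=
  ⋂₀ {I | P.IsStarIdeal I ∧ A ⊆ I}

/-- A homomorphism of partially additive Kleene algebras. -/
def IsPKAHom {K K' : Type*} (P : PKA K) (Q : PKA K') (f : K → K') : Prop :=
  (∀ a b, P.summable a b → Q.summable (f a) (f b) ∧ f (P.add a b) = Q.add (f a) (f b)) ∧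
  (∀ a b, f (P.mul a b) = Q.mul (f a) (f b)) ∧
  (∀ a, f (P.star a) = Q.star (f a)) ∧
  f P.zero = Q.zero ∧
  f P.one = Q.one


/-!
The preimage of a star-ideal under a homomorphism is again a star-ideal, because `f` preserves
defined sums, the order, products, powers and stars. Hence `f⁻¹⟨f[A]⟩` is a star-ideal containing
`A`, so it contains `⟨A⟩`, i.e. `f[⟨A⟩] ⊆ ⟨f[A]⟩`; the reverse inclusion is monotonicity of `⟨·⟩`.
-/

namespace PKA

variable {K : Type*} (P : PKA K)

lemma zero_le (y : K) : P.le P.zero y := by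
  obtain ⟨hsum, hadd⟩ := P.add_comm y P.zero (P.summable_zero y)
  exact ⟨hsum, by rw [← hadd, P.add_zero]⟩

variable {P}

lemma IsStarIdeal.zero_mem {I : Set K} (hI : P.IsStarIdeal I) : P.zero ∈ I := by
  obtain ⟨⟨y, hy⟩, -, hdown, -⟩ := hI
  exact hdown _ y hy (P.zero_le y)

variable (P)

lemma subset_gen (A : Set K) : A ⊆ P.gen A :=
  fun _ ha _ hI => hI.2 ha

lemma gen_minimal {A I : Set K} (hI : P.IsStarIdeal I) (hAI : A ⊆ I) : P.gen A ⊆ I :=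
  fun _ hx => hx I ⟨hI, hAI⟩

lemma isStarIdeal_gen (A : Set K) : P.IsStarIdeal (P.gen A) := by
  refine ⟨⟨P.zero, fun I hI => hI.1.zero_mem⟩, ?_, ?_, ?_⟩
  · exact fun a ha b hb hab I hI => hI.1.2.1 a (ha I hI) b (hb I hI) hab
  · exact fun x y hy hxy I hI => hI.1.2.2.1 x y (hy I hI) hxy
  · exact fun a b c hpow I hI => hI.1.2.2.2 a b c (fun n => hpow n I hI)

lemma gen_mono {A B : Set K} (h : A ⊆ B) : P.gen A ⊆ P.gen B :=
  P.gen_minimal (P.isStarIdeal_gen B) (h.trans (P.subset_gen B))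

end PKA

namespace IsPKAHom

variable {K K' : Type*} {P : PKA K} {Q : PKA K'} {f : K → K'} (hf : IsPKAHom P Q f)
include hf

lemma map_add {a b : K} (h : P.summable a b) :
    Q.summable (f a) (f b) ∧ f (P.add a b) = Q.add (f a) (f b) :=
  hf.1 a b h

lemma map_mul (a b : K) : f (P.mul a b) = Q.mul (f a) (f b) := hf.2.1 a b

lemma map_star (a : K) : f (P.star a) = Q.star (f a) := hf.2.2.1 a

lemma map_zero : f P.zero = Q.zero := hf.2.2.2.1

lemma map_pow (b : K) (n : ℕ) : f (P.pow b n) = Q.pow (f b) n := by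
  induction n with
  | zero => exact hf.2.2.2.2
  | succ n ih =>
    change f (P.mul b (P.pow b n)) = Q.mul (f b) (Q.pow (f b) n)
    rw [hf.map_mul, ih]

lemma map_le {x y : K} (h : P.le x y) : Q.le (f x) (f y) := by
  obtain ⟨hsum, hadd⟩ := h
  obtain ⟨hsum', hadd'⟩ := hf.map_add hsum
  exact ⟨hsum', by rw [← hadd', hadd]⟩

lemma map_mul_pow_mul (a b c : K) (n : ℕ) :
    f (P.mul a (P.mul (P.pow b n) c)) = Q.mul (f a) (Q.mul (Q.pow (f b) n) (f c)) := by
  rw [hf.map_mul, hf.map_mul, hf.map_pow]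

lemma map_mul_star_mul (a b c : K) :
    f (P.mul a (P.mul (P.star b) c)) = Q.mul (f a) (Q.mul (Q.star (f b)) (f c)) := by
  rw [hf.map_mul, hf.map_mul, hf.map_star]

lemma isStarIdeal_preimage {J : Set K'} (hJ : Q.IsStarIdeal J) : P.IsStarIdeal (f ⁻¹' J) := by
  have hzero : f P.zero ∈ J := hf.map_zero ▸ hJ.zero_mem
  obtain ⟨-, hadd, hdown, hstar⟩ := hJ
  refine ⟨⟨P.zero, hzero⟩, ?_, ?_, ?_⟩
  · intro a ha b hb hab
    obtain ⟨hsum, hmap⟩ := hf.map_add hab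
    rw [Set.mem_preimage, hmap]
    exact hadd _ ha _ hb hsum
  · exact fun x y hy hxy => hdown (f x) (f y) hy (hf.map_le hxy)
  · intro a b c hpow
    rw [Set.mem_preimage, hf.map_mul_star_mul]
    exact hstar _ _ _ fun n => hf.map_mul_pow_mul a b c n ▸ hpow n

lemma image_gen_subset (A : Set K) : f '' P.gen A ⊆ Q.gen (f '' A) := by
  rw [Set.image_subset_iff]
  exact P.gen_minimal (hf.isStarIdeal_preimage (Q.isStarIdeal_gen _))
    (Set.image_subset_iff.mp (Q.subset_gen _))

end IsPKAHom

theorem pka_hom_gen_image_general {K K' : Type*} (P : PKA K) (Q : PKA K')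
    (f : K → K') (hf : IsPKAHom P Q f) :
    ∀ A : Set K, Q.gen (f '' P.gen A) = Q.gen (f '' A) := by
  intro A
  apply Set.Subset.antisymm
  · exact Q.gen_minimal (Q.isStarIdeal_gen _) (hf.image_gen_subset A)
  · exact Q.gen_mono (Set.image_mono (P.subset_gen A))

/-- For a homomorphism f of star-continuous PKAs and any subset A,
gen (f [gen A]) = gen (f [A]). -/
theorem pka_hom_gen_image {K K' : Type*} (P : PKA K) (Q : PKA K')
    (hP : P.StarContinuous) (hQ : Q.StarContinuous)
    (f : K → K') (hf : IsPKAHom P Q f) :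
    ∀ A : Set K, Q.gen (f '' P.gen A) = Q.gen (f '' A) :=
  pka_hom_gen_image_general P Q f hf
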